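/- Let (Λ_Q, f) be a C^{1+Lip} expansive and transitive Markov system. Then {x ∈ Λ_Q : χ(x) > 0} = ⋃_{α > 0} H_HT(α); that is, a point of Λ_Q has positive Lyapunov exponent if and only if it has infinitely many hyperbolic times with some positive exponent. -/

import Mathlib

open Set Metric Filter MeasureTheory
open scoped Classical

/-- The word `[ω 0, ω 1, …, ω (n-1)]` read off from the sequence `ω`. -/
def wordOf {p : ℕ} (ω : ℕ → Fin p) (n : ℕ) : List (Fin p) :=
  (List.range n).map ω

/-- The cylinder sets `Δ_{i₁…iₙ} = g_{i₁…i_{n-1}}(I_{iₙ})` of the iterated function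
system given by the big interval `I`, the subintervals `Isub i` and the maps `g i`;
by convention `Δ_∅ = I`. -/
def cylOf {p : ℕ} (I : Set ℝ) (Isub : Fin p → Set ℝ) (g : Fin p → ℝ → ℝ) :
    List (Fin p) → Set ℝ
  | [] => I
  | [i] => Isub i
  | i :: j :: w => g i '' cylOf I Isub g (j :: w)

/-- The sequence `ω` contains the word `w` as a sub-word starting at position `n`. -/
def containsAt {p : ℕ} (ω : ℕ → Fin p) (w : List (Fin p)) (n : ℕ) : Prop :=
  ∀ k : ℕ, (hk : k < w.length) → ω (n + k) = w.get ⟨k, hk⟩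

/-- The sequence `ω` belongs to `Σ_Q`, i.e. it contains no word of `Q` as a sub-word. -/
def avoids {p : ℕ} (Q : Finset (List (Fin p))) (ω : ℕ → Fin p) : Prop :=
  ∀ w ∈ Q, ∀ n : ℕ, ¬ containsAt ω w n

/-- The limit set `Λ_Q = π(Σ_Q)`: points lying, for some `ω ∈ Σ_Q`, in all the
cylinders `Δ_{ω₀…ω_{n-1}}`. -/
def limitSetOf {p : ℕ} (I : Set ℝ) (Isub : Fin p → Set ℝ) (g : Fin p → ℝ → ℝ)
    (Q : Finset (List (Fin p))) : Set ℝ :=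
  { x | ∃ ω : ℕ → Fin p, avoids Q ω ∧ ∀ n : ℕ, x ∈ cylOf I Isub g (wordOf ω n) }

/-- `gIter g ω n = g_{i_n … i_1} = g_{ω (n-1)} ∘ ⋯ ∘ g_{ω 0}`. -/
def gIter {p : ℕ} (g : Fin p → ℝ → ℝ) (ω : ℕ → Fin p) : ℕ → ℝ → ℝ
  | 0 => id
  | n + 1 => g (ω n) ∘ gIter g ω n

/-- The derivative of the composition `gIter g ω n` at `x` (chain rule product). -/
noncomputable def gIterDer {p : ℕ} (g gder : Fin p → ℝ → ℝ) (ω : ℕ → Fin p)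
    (n : ℕ) (x : ℝ) : ℝ :=
  ∏ k ∈ Finset.range n, gder (ω k) (gIter g ω k x)

/-- Prepending the finite word `w` to the infinite sequence `ω`. -/
def prependWord {p : ℕ} (w : List (Fin p)) (ω : ℕ → Fin p) : ℕ → Fin p :=
  fun n => if h : n < w.length then w.get ⟨n, h⟩ else ω (n - w.length)

/-- `l(Σ_Q)`: the minimum, over all finite sets `Q'` of words with `Σ_{Q'} = Σ_Q`,
of the maximal length `l(Q')` of words of `Q'`. -/
noncomputable def minRepLen {p : ℕ} (Q : Finset (List (Fin p))) : ℕ :=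
  sInf { n : ℕ | ∃ Q' : Finset (List (Fin p)),
    (∀ ω : ℕ → Fin p, avoids Q' ω ↔ avoids Q ω) ∧ Q'.sup List.length = n }

/-- A `C^{1+Lip}` expansive and transitive Markov system `(Λ_Q, f)`. -/
structure ExpansiveMarkovSystem (p : ℕ) where
  /-- the alphabet is nonempty -/
  hp : 0 < p
  /-- the ambient closed interval `I` -/
  I : Set ℝ
  hI : ∃ a b : ℝ, a < b ∧ I = Set.Icc a b
  /-- the pairwise disjoint closed subintervals `I₁, …, I_p` -/
  Isub : Fin p → Set ℝ
  hIsub : ∀ i, ∃ a b : ℝ, a < b ∧ Isub i = Set.Icc a b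
  hsubI : ∀ i, Isub i ⊆ I
  hdisj : ∀ i j, i ≠ j → Disjoint (Isub i) (Isub j)
  /-- the contractions `g i`, defined on `⋃ j, Isub j` -/
  g : Fin p → ℝ → ℝ
  /-- the derivative of `g i` on `⋃ j, Isub j` -/
  gder : Fin p → ℝ → ℝ
  hg_inj : ∀ i, Set.InjOn (g i) (⋃ j, Isub j)
  hg_range : ∀ i, g i '' (⋃ j, Isub j) ⊆ interior (Isub i)
  hg_deriv : ∀ i, ∀ x ∈ ⋃ j, Isub j,
    HasDerivWithinAt (g i) (gder i x) (⋃ j, Isub j) x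
  hgder_ne : ∀ i, ∀ x ∈ ⋃ j, Isub j, gder i x ≠ 0
  hgder_cont : ∀ i, ContinuousOn (gder i) (⋃ j, Isub j)
  /-- `log |g i'|` is Lipschitz on the domain -/
  hgder_lip : ∀ i, ∃ θ : ℝ, ∀ x ∈ ⋃ j, Isub j, ∀ y ∈ ⋃ j, Isub j,
    abs (Real.log (abs (gder i x)) - Real.log (abs (gder i y))) ≤ θ * |x - y|
  /-- the expanding map `f`, with `f (g i x) = x` -/
  f : ℝ → ℝ
  /-- the derivative `f'` of `f` on the ranges of the `g i` -/
  fder : ℝ → ℝ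
  hf : ∀ i, ∀ x ∈ ⋃ j, Isub j, f (g i x) = x
  hfder : ∀ i, ∀ x ∈ ⋃ j, Isub j, fder (g i x) = (gder i x)⁻¹
  /-- the generator (expansivity) condition: `d_n → 0` -/
  hgen : ∀ ε : ℝ, 0 < ε → ∃ N : ℕ, ∀ w : List (Fin p), N ≤ w.length →
    Metric.diam (cylOf I Isub g w) < ε
  /-- the finite set of forbidden words -/
  Q : Finset (List (Fin p))
  /-- `Σ_Q` is completely invariant: `σ(Σ_Q) = Σ_Q` -/
  hQinv : ∀ ω : ℕ → Fin p, avoids Q ω →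
    ∃ ω' : ℕ → Fin p, avoids Q ω' ∧ ∀ n : ℕ, ω' (n + 1) = ω n
  /-- `f|Λ_Q` is topologically transitive -/
  htrans : ∀ U V : Set ℝ, IsOpen U → IsOpen V →
    (U ∩ limitSetOf I Isub g Q).Nonempty → (V ∩ limitSetOf I Isub g Q).Nonempty →
    ∃ n : ℕ, ∃ x ∈ U ∩ limitSetOf I Isub g Q, f^[n] x ∈ V

namespace ExpansiveMarkovSystem

variable {p : ℕ} (S : ExpansiveMarkovSystem p)

/-- The common domain `⋃ j, I_j` of the maps `g i`. -/
def dom : Set ℝ := ⋃ j, S.Isub j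

/-- The cylinder `Δ_w` associated to the word `w`. -/
def cyl (w : List (Fin p)) : Set ℝ := cylOf S.I S.Isub S.g w

/-- The limit set `Λ_Q`. -/
def limitSet : Set ℝ := limitSetOf S.I S.Isub S.g S.Q

/-- The domain of `f`, i.e. the union of the ranges of the `g i`. -/
def domF : Set ℝ := ⋃ i, S.g i '' S.dom

/-- The derivative `(fⁿ)'(x)` of the `n`-th iterate of `f` at `x`. -/
noncomputable def derIter (n : ℕ) (x : ℝ) : ℝ :=
  ∏ k ∈ Finset.range n, S.fder (S.f^[k] x)

/-- The Lyapunov exponent `χ(x) = limsup (1/n) log |(fⁿ)'(x)|`. -/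
noncomputable def lyap (x : ℝ) : ℝ :=
  Filter.limsup (fun n : ℕ => Real.log |S.derIter n x| / n) Filter.atTop

/-- The set `H` of points of `Λ_Q` with infinitely many hyperbolic instants. -/
def hypSet : Set ℝ :=
  { x ∈ S.limitSet | ∃ c₁ : ℝ, 0 < c₁ ∧ ∃ c₂ : ℝ, 0 < c₂ ∧
      ∃ n : ℕ → ℕ, StrictMono n ∧
        ∃ r : ℕ → ℝ, (∀ k, 0 < r k) ∧ Antitone r ∧
          Filter.Tendsto r Filter.atTop (nhds 0) ∧
          ∀ k : ℕ,
            (∀ y ∈ Metric.ball x (r k), ∀ j < n k, S.f^[j] y ∈ S.domF) ∧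
            c₁ < Metric.diam (S.f^[n k] '' Metric.ball x (r k)) ∧
            (∀ y ∈ Metric.ball x (r k), ∀ z ∈ Metric.ball x (r k),
              |S.derIter (n k) y| / |S.derIter (n k) z| < c₂) }

/-- `x` is a parabolic periodic point: `f^m(x) = x` and `|(f^m)'(x)| = 1`. -/
def IsParabolicPeriodic (x : ℝ) : Prop :=
  x ∈ S.limitSet ∧ ∃ m : ℕ, 1 ≤ m ∧ S.f^[m] x = x ∧ |S.derIter m x| = 1

/-- `ν` is a `t`-conformal (Borel probability) measure supported on `Λ_Q`. -/
def IsConformal (ν : Measure ℝ) (t : ℝ) : Prop :=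
  IsProbabilityMeasure ν ∧ ν S.limitSetᶜ = 0 ∧
    ∀ A : Set ℝ, MeasurableSet A → A ⊆ S.limitSet → Set.InjOn S.f A →
      ν (S.f '' A) = ∫⁻ x in A, ENNReal.ofReal (|S.fder x| ^ t) ∂ν

/-- `t_c = inf {t ≥ 0 : a t-conformal measure on Λ_Q exists}`. -/
noncomputable def tc : ℝ :=
  sInf { t : ℝ | 0 ≤ t ∧ ∃ ν : Measure ℝ, S.IsConformal ν t }

/-- `n` is a hyperbolic time for `x` with exponent `α`. -/
def IsHypTime (α : ℝ) (x : ℝ) (n : ℕ) : Prop :=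
  ∀ k : ℕ, 1 ≤ k → k ≤ n → Real.exp (k * α) ≤ |S.derIter k (S.f^[n - k] x)|

/-- `H_HT(α)`: the points of `Λ_Q` with infinitely many hyperbolic times with exponent `α`. -/
def HHT (α : ℝ) : Set ℝ :=
  { x ∈ S.limitSet | ∀ N : ℕ, ∃ n : ℕ, N ≤ n ∧ S.IsHypTime α x n }

end ExpansiveMarkovSystem

/-!
Along the orbit of a point of `Λ_Q` the factors `f'(fᵏ x) = 1 / g_i'(fᵏ⁺¹ x)` are nonzero and
`log |f'|` is bounded, by compactness of `⋃ I_j`. Hence `sₙ = log |(fⁿ)'(x)|` is an additive cocycle,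
`sₙ₊ₖ = sₙ + log |(fᵏ)'(fⁿ x)|`, with `sₙ / n` bounded. A hyperbolic time `n` with exponent `α` gives
`sₙ ≥ n α`, so `χ(x) ≥ α`. Conversely, if `χ(x) > α` then `sₙ - n α` is unbounded above, and every
record time `n` of this sequence is a hyperbolic time with exponent `α`: for `m < n`,
`log |(fⁿ⁻ᵐ)'(fᵐ x)| = sₙ - sₘ > (n - m) α`.
-/

theorem exists_ge_forall_lt_of_not_bddAbove {β : Type*} [LinearOrder β] {u : ℕ → β}
    (hu : ¬BddAbove (range u)) (N : ℕ) : ∃ n ≥ N, ∀ k < n, u k < u n := by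
  obtain ⟨k, -, hku⟩ : ∃ k ≤ N, ∀ l ≤ N, u l ≤ u k :=
    exists_max_image _ u (finite_le_nat N) ⟨N, le_refl N⟩
  have hex : ∃ n, u k < u n := by
    obtain ⟨_, ⟨n, rfl⟩, hn⟩ := not_bddAbove_iff.1 hu (u k)
    exact ⟨n, hn⟩
  have hN : N < Nat.find hex := by
    by_contra! h
    exact (Nat.find_spec hex).not_ge (hku _ h)
  refine ⟨Nat.find hex, hN.le, fun m hm => ?_⟩
  exact (not_lt.1 (Nat.find_min hex hm)).trans_lt (Nat.find_spec hex)

theorem exists_ge_forall_mul_lt_sub_of_lt_limsup {s : ℕ → ℝ} {α : ℝ}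
    (hs : IsCoboundedUnder (· ≤ ·) atTop (fun n => s n / n))
    (hα : α < limsup (fun n => s n / n) atTop) (N : ℕ) :
    ∃ n ≥ N, ∀ m < n, ((n : ℝ) - m) * α < s n - s m := by
  obtain ⟨β, hαβ, hβ⟩ := exists_between hα
  have hfreq := frequently_lt_of_lt_limsup hs hβ
  have hunbdd : ¬BddAbove (range fun n : ℕ => s n - n * α) := by
    rintro ⟨B, hB⟩
    obtain ⟨N₀, hN₀⟩ := exists_nat_gt (B / (β - α))
    obtain ⟨n, hn, hsn⟩ := frequently_atTop.1 hfreq (max N₀ 1)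
    have hn0 : (0 : ℝ) < n := by exact_mod_cast (by omega : 0 < n)
    have hN₀n : (N₀ : ℝ) ≤ n := by exact_mod_cast (by omega : N₀ ≤ n)
    rw [div_lt_iff₀ (sub_pos.2 hαβ)] at hN₀
    rw [lt_div_iff₀ hn0] at hsn
    nlinarith [hB ⟨n, rfl⟩, mul_le_mul_of_nonneg_right hN₀n (sub_pos.2 hαβ).le]
  obtain ⟨n, hnN, hrec⟩ := exists_ge_forall_lt_of_not_bddAbove hunbdd N
  exact ⟨n, hnN, fun m hm => by linarith [hrec m hm]⟩

lemma wordOf_succ {p : ℕ} (ω : ℕ → Fin p) (n : ℕ) :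
    wordOf ω (n + 1) = ω 0 :: wordOf (fun k => ω (k + 1)) n := by
  simp [wordOf, List.range_succ_eq_map, Function.comp_def]

namespace ExpansiveMarkovSystem

variable {p : ℕ} (S : ExpansiveMarkovSystem p)

lemma cyl_cons_subset (i : Fin p) (w : List (Fin p)) : S.cyl (i :: w) ⊆ S.Isub i := by
  induction w generalizing i with
  | nil => exact subset_rfl
  | cons j w ih =>
    rintro _ ⟨y, hy, rfl⟩
    exact interior_subset (S.hg_range i ⟨y, mem_iUnion.2 ⟨j, ih j hy⟩, rfl⟩)

lemma f_mem_cyl_of_mem_cyl_cons {i j : Fin p} {w : List (Fin p)} {x : ℝ}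
    (hx : x ∈ S.cyl (i :: j :: w)) : S.f x ∈ S.cyl (j :: w) ∧ S.g i (S.f x) = x := by
  obtain ⟨y, hy, rfl⟩ := hx
  rw [S.hf i y (mem_iUnion.2 ⟨j, S.cyl_cons_subset j w hy⟩)]
  exact ⟨hy, rfl⟩

lemma mapsTo_f_limitSet : MapsTo S.f S.limitSet S.limitSet := by
  rintro x ⟨ω, hω, hx⟩
  refine ⟨fun k => ω (k + 1), fun w hw n hn => hω w hw (n + 1) ?_, fun n => ?_⟩
  · intro k hk
    rw [add_right_comm]
    exact hn k hk
  have hcyl : ∀ n, S.f x ∈ S.cyl (wordOf (fun k => ω (k + 1)) (n + 1)) := fun n => by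
    have := hx (n + 2)
    rw [wordOf_succ, wordOf_succ] at this
    rw [wordOf_succ]
    exact (S.f_mem_cyl_of_mem_cyl_cons this).1
  cases n with
  | zero =>
    have h0 := hcyl 0
    rw [wordOf_succ] at h0
    exact S.hsubI _ (S.cyl_cons_subset _ _ h0)
  | succ n => exact hcyl n

lemma iterate_mem_limitSet {x : ℝ} (hx : x ∈ S.limitSet) (n : ℕ) : S.f^[n] x ∈ S.limitSet :=
  S.mapsTo_f_limitSet.iterate n hx

lemma exists_fder_eq_inv_gder {x : ℝ} (hx : x ∈ S.limitSet) :
    ∃ i, ∃ y ∈ S.dom, S.fder x = (S.gder i y)⁻¹ := by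
  obtain ⟨ω, -, hxω⟩ := hx
  obtain ⟨hfx, hgfx⟩ := S.f_mem_cyl_of_mem_cyl_cons (w := []) (hxω 2)
  have hfx_dom : S.f x ∈ S.dom := mem_iUnion.2 ⟨ω 1, hfx⟩
  exact ⟨ω 0, S.f x, hfx_dom, by rw [← S.hfder (ω 0) _ hfx_dom, hgfx]⟩

lemma fder_ne_zero {x : ℝ} (hx : x ∈ S.limitSet) : S.fder x ≠ 0 := by
  obtain ⟨i, y, hy, h⟩ := S.exists_fder_eq_inv_gder hx
  exact h ▸ inv_ne_zero (S.hgder_ne i y hy)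

lemma isCompact_dom : IsCompact S.dom := by
  refine isCompact_iUnion fun i => ?_
  obtain ⟨a, b, -, h⟩ := S.hIsub i
  exact h ▸ isCompact_Icc

lemma exists_abs_log_abs_fder_le : ∃ K, ∀ x ∈ S.limitSet, |(Real.log |S.fder x|)| ≤ K := by
  have hbound : ∀ i, ∃ K, ∀ y ∈ S.dom, ‖Real.log |S.gder i y|‖ ≤ K := fun i =>
    S.isCompact_dom.exists_bound_of_continuousOn <|
      (S.hgder_cont i).abs.log fun y hy => abs_ne_zero.2 (S.hgder_ne i y hy)
  choose K hK using hbound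
  obtain ⟨B, hB⟩ := (finite_range K).bddAbove
  refine ⟨B, fun x hx => ?_⟩
  obtain ⟨i, y, hy, h⟩ := S.exists_fder_eq_inv_gder hx
  rw [h, abs_inv, Real.log_inv, abs_neg]
  exact (hK i y hy).trans (hB ⟨i, rfl⟩)

lemma derIter_add (m k : ℕ) (x : ℝ) :
    S.derIter (m + k) x = S.derIter m x * S.derIter k (S.f^[m] x) := by
  simp only [derIter, Finset.prod_range_add, ← Function.iterate_add_apply, add_comm]

lemma derIter_ne_zero {x : ℝ} (hx : x ∈ S.limitSet) (n : ℕ) : S.derIter n x ≠ 0 :=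
  Finset.prod_ne_zero_iff.2 fun k _ => S.fder_ne_zero (S.iterate_mem_limitSet hx k)

lemma log_abs_derIter_add {x : ℝ} (hx : x ∈ S.limitSet) (m k : ℕ) :
    Real.log |S.derIter (m + k) x| =
      Real.log |S.derIter m x| + Real.log |S.derIter k (S.f^[m] x)| := by
  rw [derIter_add, abs_mul, Real.log_mul (abs_ne_zero.2 (S.derIter_ne_zero hx m))
    (abs_ne_zero.2 (S.derIter_ne_zero (S.iterate_mem_limitSet hx m) k))]

lemma exists_abs_log_abs_derIter_div_le :
    ∃ K, ∀ x ∈ S.limitSet, ∀ n : ℕ, |(Real.log |S.derIter n x| / n)| ≤ K := by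
  obtain ⟨K, hK⟩ := S.exists_abs_log_abs_fder_le
  refine ⟨K, fun x hx n => ?_⟩
  have hK0 : 0 ≤ K := (abs_nonneg _).trans (hK x hx)
  rcases n.eq_zero_or_pos with rfl | hn
  · simpa using hK0
  have hsum : |(Real.log |S.derIter n x|)| ≤ n * K := by
    rw [derIter, Finset.abs_prod, Real.log_prod fun k _ =>
      abs_ne_zero.2 (S.fder_ne_zero (S.iterate_mem_limitSet hx k))]
    calc _ ≤ ∑ k ∈ Finset.range n, |(Real.log |S.fder (S.f^[k] x)|)| :=
          Finset.abs_sum_le_sum_abs _ _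
      _ ≤ ∑ _k ∈ Finset.range n, K :=
          Finset.sum_le_sum fun k _ => hK _ (S.iterate_mem_limitSet hx k)
      _ = n * K := by simp
  rw [abs_div, Nat.abs_cast, div_le_iff₀ (by exact_mod_cast hn)]
  linarith

lemma le_lyap_of_mem_HHT {α x : ℝ} (hx : x ∈ S.HHT α) : α ≤ S.lyap x := by
  obtain ⟨K, hK⟩ := S.exists_abs_log_abs_derIter_div_le
  refine le_limsup_of_frequently_le (frequently_atTop.2 fun N => ?_)
    (isBoundedUnder_of ⟨K, fun n => (abs_le.1 (hK x hx.1 n)).2⟩)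
  obtain ⟨n, hn, hyp⟩ := hx.2 (max N 1)
  have hn0 : (0 : ℝ) < n := by exact_mod_cast (by omega : 0 < n)
  have hexp := hyp n (by omega) le_rfl
  rw [Nat.sub_self, Function.iterate_zero_apply] at hexp
  refine ⟨n, by omega, ?_⟩
  rw [le_div_iff₀ hn0, mul_comm, Real.le_log_iff_exp_le
    (abs_pos.2 (S.derIter_ne_zero hx.1 n))]
  exact hexp

lemma mem_HHT_of_lt_lyap {α x : ℝ} (hx : x ∈ S.limitSet) (hα : α < S.lyap x) :
    x ∈ S.HHT α := by
  obtain ⟨K, hK⟩ := S.exists_abs_log_abs_derIter_div_le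
  have hcobdd : IsCoboundedUnder (· ≤ ·) atTop (fun n : ℕ => Real.log |S.derIter n x| / n) :=
    (isBoundedUnder_of ⟨-K, fun n => (abs_le.1 (hK x hx n)).1⟩).isCoboundedUnder_le
  refine ⟨hx, fun N => ?_⟩
  obtain ⟨n, hnN, hrec⟩ := exists_ge_forall_mul_lt_sub_of_lt_limsup hcobdd hα N
  refine ⟨n, hnN, fun k _ hkn => ?_⟩
  have hgrowth := hrec (n - k) (by omega)
  have hsplit := S.log_abs_derIter_add hx (n - k) k
  rw [Nat.sub_add_cancel hkn] at hsplit
  rw [Nat.cast_sub hkn] at hgrowth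
  rw [← Real.le_log_iff_exp_le (abs_pos.2 (S.derIter_ne_zero (S.iterate_mem_limitSet hx _) k))]
  linarith

end ExpansiveMarkovSystem

/-- `{x ∈ Λ_Q : χ(x) > 0} = ⋃_{α > 0} H_HT(α)`: a point of `Λ_Q` has
positive Lyapunov exponent iff it has infinitely many hyperbolic times with some positive
exponent. -/
theorem pos_lyap_eq_union_HHT {p : ℕ} (S : ExpansiveMarkovSystem p) :
    { x | x ∈ S.limitSet ∧ 0 < S.lyap x } = ⋃ α ∈ Set.Ioi (0 : ℝ), S.HHT α := by
  ext x
  simp only [mem_ofPred_eq, mem_iUnion, mem_Ioi, exists_prop]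
  constructor
  · rintro ⟨hx, hpos⟩
    exact ⟨S.lyap x / 2, half_pos hpos, S.mem_HHT_of_lt_lyap hx (half_lt_self hpos)⟩
  · rintro ⟨α, hα, hx⟩
    exact ⟨hx.1, hα.trans_le (S.le_lyap_of_mem_HHT hx)⟩
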